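/- arXiv:1901.06485 — 2 statements merged into one kernel-verified Lean document; each statement's English description precedes it below -/
import Mathlib

section
/- Fix d ≥ 1 and m ∈ ℕ. Let v : Fin d → MvPolynomial (Fin d) ℝ be a vector field with polynomial components in d variables over ℝ such that for all indices i, j one has pderiv i (v j) = pderiv j (v i) (symmetry of the formal Jacobian, i.e., the curl-free condition), and suppose each component v i has total degree at most m. Then there exists a polynomial f in d variables over ℝ with total degree at most m+1 such that pderiv i f = v i for every i. -/
/-!
With the Euler operator `E = ∑ᵢ Xᵢ ∂ᵢ`, the candidate potential is a solution of `E f = p`, where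
`p = ∑ᵢ Xᵢ vᵢ`; such `f` exists since `E` acts on homogeneous components of degree `k` as
multiplication by `k` and `p` has no constant term. The curl-free condition gives
`∂ⱼ p = vⱼ + E vⱼ`, while `∂ⱼ E = E ∂ⱼ + ∂ⱼ`, so `(E + 1) (∂ⱼ f) = (E + 1) vⱼ`, and `E + 1` is
injective because it multiplies the coefficient of `X^μ` by `|μ| + 1`.
-/

open MvPolynomial

namespace MvPolynomial

variable {σ R : Type*} [Fintype σ]

section CommSemiring

variable [CommSemiring R]

variable (σ R) in
noncomputable def euler : MvPolynomial σ R →ₗ[R] MvPolynomial σ R :=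
  ∑ i, LinearMap.mulLeft R (X i) ∘ₗ (pderiv i).toLinearMap

theorem euler_apply (p : MvPolynomial σ R) : euler σ R p = ∑ i, X i * pderiv i p := by
  simp [euler]

theorem euler_monomial (s : σ →₀ ℕ) (a : R) :
    euler σ R (monomial s a) = s.degree • monomial s a := by
  rw [euler_apply, (isHomogeneous_monomial a rfl).sum_X_mul_pderiv]

theorem coeff_euler (p : MvPolynomial σ R) (μ : σ →₀ ℕ) :
    coeff μ (euler σ R p) = μ.degree • coeff μ p := by
  classical
  induction p using MvPolynomial.induction_on' with
  | monomial s a =>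
    rw [euler_monomial, coeff_smul, coeff_monomial]
    split_ifs with h <;> simp [h]
  | add p q hp hq => simp only [map_add, coeff_add, hp, hq, smul_add]

theorem pderiv_euler (i : σ) (p : MvPolynomial σ R) :
    pderiv i (euler σ R p) = euler σ R (pderiv i p) + pderiv i p := by
  ext μ
  simp only [coeff_add, coeff_pderiv, coeff_euler, map_add, Finsupp.degree_single,
    nsmul_eq_mul]
  push_cast
  ring

theorem pderiv_sum_X_mul_of_pderiv_comm {v : σ → MvPolynomial σ R}
    (hcurl : ∀ i j, pderiv i (v j) = pderiv j (v i)) (j : σ) :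
    pderiv j (∑ i, X i * v i) = euler σ R (v j) + v j := by
  classical
  simp only [map_sum, Derivation.leibniz, pderiv_X, smul_eq_mul, Finset.sum_add_distrib,
    euler_apply, hcurl _ j, Pi.single_apply, mul_ite, mul_one, mul_zero, Finset.sum_ite_eq',
    Finset.mem_univ, if_true]

theorem euler_add_self_injective [IsAddTorsionFree R] :
    Function.Injective fun p : MvPolynomial σ R => euler σ R p + p := by
  intro p q h
  ext μ
  have := congrArg (coeff μ) h
  simp only [coeff_add, coeff_euler, ← succ_nsmul] at this
  exact nsmul_right_injective μ.degree.succ_ne_zero this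

theorem coeff_zero_sum_X_mul (v : σ → MvPolynomial σ R) :
    coeff 0 (∑ i, X i * v i) = 0 := by
  classical
  simp [coeff_sum, coeff_X_mul']

theorem totalDegree_sum_X_mul_le {v : σ → MvPolynomial σ R} {m : ℕ}
    (hdeg : ∀ i, (v i).totalDegree ≤ m) : (∑ i, X i * v i).totalDegree ≤ m + 1 := by
  refine (totalDegree_finsetSum _ _).trans (Finset.sup_le fun i _ => ?_)
  have hX : (X i : MvPolynomial σ R).totalDegree ≤ 1 :=
    (totalDegree_monomial_le _ _).trans (by simp)
  grw [totalDegree_mul, hX, hdeg i, add_comm]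

theorem pderiv_eq_of_euler_eq_sum_X_mul [IsAddTorsionFree R]
    {v : σ → MvPolynomial σ R} (hcurl : ∀ i j, pderiv i (v j) = pderiv j (v i))
    {f : MvPolynomial σ R} (hf : euler σ R f = ∑ i, X i * v i) (j : σ) :
    pderiv j f = v j :=
  euler_add_self_injective <| by
    dsimp only
    rw [← pderiv_euler, hf, pderiv_sum_X_mul_of_pderiv_comm hcurl]

end CommSemiring

theorem exists_euler_eq [Field R] [CharZero R] {p : MvPolynomial σ R} (hp : coeff 0 p = 0) :
    ∃ f : MvPolynomial σ R, f.totalDegree ≤ p.totalDegree ∧ euler σ R f = p := by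
  refine ⟨∑ k ∈ Finset.range (p.totalDegree + 1), (k : R)⁻¹ • homogeneousComponent k p, ?_, ?_⟩
  · refine (totalDegree_finsetSum _ _).trans (Finset.sup_le fun k _ => ?_)
    refine (totalDegree_smul_le _ _).trans (totalDegree_le_of_support_subset ?_)
    rw [support_homogeneousComponent]
    exact Finset.filter_subset _ _
  · conv_rhs => rw [← sum_homogeneousComponent p]
    rw [map_sum]
    refine Finset.sum_congr rfl fun k _ => ?_
    rcases eq_or_ne k 0 with rfl | hk
    · simp [hp]
    · rw [map_smul, euler_apply, (homogeneousComponent_isHomogeneous k p).sum_X_mul_pderiv,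
        ← Nat.cast_smul_eq_nsmul R, smul_smul, inv_mul_cancel₀ (Nat.cast_ne_zero.mpr hk), one_smul]

end MvPolynomial

theorem exists_potential_of_curlFree_general (d m : ℕ)
    (v : Fin d → MvPolynomial (Fin d) ℝ)
    (hcurl : ∀ i j : Fin d, pderiv i (v j) = pderiv j (v i))
    (hdeg : ∀ i : Fin d, (v i).totalDegree ≤ m) :
    ∃ f : MvPolynomial (Fin d) ℝ, f.totalDegree ≤ m + 1 ∧
      ∀ i : Fin d, pderiv i f = v i := by
  obtain ⟨f, hfdeg, hf⟩ := exists_euler_eq (coeff_zero_sum_X_mul v)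
  exact ⟨f, hfdeg.trans (totalDegree_sum_X_mul_le hdeg), pderiv_eq_of_euler_eq_sum_X_mul hcurl hf⟩

/-- Polynomial version of `H(curl⁰; K) = ∇H¹(K)` in dimension `d`:
a polynomial vector field `v` with symmetric formal Jacobian (curl-free)
whose components have total degree at most `m` is the formal gradient of
a polynomial of total degree at most `m + 1`. -/
theorem exists_potential_of_curlFree (d m : ℕ) (hd : 1 ≤ d)
    (v : Fin d → MvPolynomial (Fin d) ℝ)
    (hcurl : ∀ i j : Fin d, pderiv i (v j) = pderiv j (v i))
    (hdeg : ∀ i : Fin d, (v i).totalDegree ≤ m) :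
    ∃ f : MvPolynomial (Fin d) ℝ, f.totalDegree ≤ m + 1 ∧
      ∀ i : Fin d, pderiv i f = v i :=
  exists_potential_of_curlFree_general d m v hcurl hdeg
end

section
/- Fix d ≥ 1 and m ∈ ℕ. A vector field v : Fin d → MvPolynomial (Fin d) ℝ belongs to S_m (i.e., each component has total degree at most m and pderiv i (v j) = pderiv j (v i) for all i, j) if and only if there exists a polynomial f in d variables over ℝ of total degree at most m+1 with pderiv i f = v i for every i. In other words, S_m is exactly the image of the space of polynomials of total degree at most m+1 under the formal gradient. -/
/-!
Decompose `v` into homogeneous components; they are again irrotational because `pderiv` lowers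
degrees by exactly one. For an irrotational field `v` homogeneous of degree `n`, Euler's identity
gives `∂ⱼ (∑ᵢ Xᵢ vᵢ) = vⱼ + ∑ᵢ Xᵢ ∂ᵢ vⱼ = (n + 1) vⱼ`, so `(n + 1)⁻¹ ∑ᵢ Xᵢ vᵢ` is a potential of
degree `n + 1`. Conversely, a gradient is irrotational since partial derivatives commute.
-/

namespace MvPolynomial

variable {R σ : Type*}

section CommSemiring

variable [CommSemiring R]

def IsIrrotational (v : σ → MvPolynomial σ R) : Prop :=
  ∀ i j, pderiv i (v j) = pderiv j (v i)

theorem pderiv_homogeneousComponent_succ (i : σ) (n : ℕ) (p : MvPolynomial σ R) :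
    pderiv i (homogeneousComponent (n + 1) p) = homogeneousComponent n (pderiv i p) := by
  ext β
  simp only [coeff_pderiv, coeff_homogeneousComponent, map_add, Finsupp.degree_single,
    Nat.add_right_cancel_iff, ite_mul, zero_mul]

theorem pderiv_homogeneousComponent_zero (i : σ) (p : MvPolynomial σ R) :
    pderiv i (homogeneousComponent 0 p) = 0 := by
  rw [homogeneousComponent_zero, pderiv_C]

theorem IsIrrotational.homogeneousComponent {v : σ → MvPolynomial σ R} (hv : IsIrrotational v)
    (n : ℕ) : IsIrrotational fun i => homogeneousComponent n (v i) := by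
  intro i j
  cases n with
  | zero => simp only [pderiv_homogeneousComponent_zero]
  | succ n => simp only [pderiv_homogeneousComponent_succ, hv i j]

theorem pderiv_sum_X_mul_of_isHomogeneous [Fintype σ] {v : σ → MvPolynomial σ R} {n : ℕ}
    (hv : IsIrrotational v) (hhom : ∀ i, (v i).IsHomogeneous n) (j : σ) :
    pderiv j (∑ i, X i * v i) = (n + 1) • v j := by
  classical
  have euler : ∑ i, X i * pderiv j (v i) = n • v j := by
    simp only [hv j, (hhom j).sum_X_mul_pderiv]
  simp only [map_sum, pderiv_mul, Finset.sum_add_distrib, euler, pderiv_X, Pi.single_apply,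
    ite_mul, one_mul, zero_mul, Finset.sum_ite_eq', Finset.mem_univ, if_true, add_smul, one_smul]
  abel

theorem sum_homogeneousComponent_of_totalDegree_le {p : MvPolynomial σ R} {m : ℕ}
    (hp : p.totalDegree ≤ m) : ∑ k ∈ Finset.range (m + 1), homogeneousComponent k p = p := by
  conv_rhs => rw [← sum_homogeneousComponent p]
  refine (Finset.sum_subset (Finset.range_subset_range.2 (by omega)) fun k _ hk => ?_).symm
  exact homogeneousComponent_eq_zero k p (by simpa using hk)

theorem totalDegree_pderiv_le (i : σ) (p : MvPolynomial σ R) :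
    (pderiv i p).totalDegree ≤ p.totalDegree - 1 := by
  conv_lhs => rw [← sum_homogeneousComponent p, map_sum]
  refine totalDegree_finsetSum_le fun k hk => ?_
  refine ((homogeneousComponent_isHomogeneous k p).pderiv).totalDegree_le.trans ?_
  have := Finset.mem_range.1 hk
  omega

end CommSemiring

theorem pderiv_comm [CommRing R] (i j : σ) (p : MvPolynomial σ R) :
    pderiv i (pderiv j p) = pderiv j (pderiv i p) := by
  classical
  have h : ⁅pderiv i, pderiv j⁆ = (0 : Derivation R (MvPolynomial σ R) (MvPolynomial σ R)) :=
    derivation_ext fun k => by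
      rw [Derivation.commutator_apply, pderiv_X, pderiv_X]
      simp only [Pi.single_apply]
      split_ifs <;> simp
  rw [← sub_eq_zero, ← Derivation.commutator_apply, h, Derivation.zero_apply]

theorem isIrrotational_pderiv [CommRing R] (f : MvPolynomial σ R) :
    IsIrrotational fun i => pderiv i f :=
  fun i j => pderiv_comm i j f

section Potential

variable [Field R] [CharZero R] [Fintype σ] {v : σ → MvPolynomial σ R}

theorem IsIrrotational.exists_isHomogeneous_potential {n : ℕ} (hv : IsIrrotational v)
    (hhom : ∀ i, (v i).IsHomogeneous n) :
    ∃ f : MvPolynomial σ R, f.IsHomogeneous (n + 1) ∧ ∀ j, pderiv j f = v j := by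
  refine ⟨C (n + 1 : R)⁻¹ * ∑ i, X i * v i, ?_, fun j => ?_⟩
  · rw [add_comm n]
    exact (IsHomogeneous.sum _ _ _ fun i _ => (isHomogeneous_X R i).mul (hhom i)).C_mul _
  · rw [pderiv_C_mul, pderiv_sum_X_mul_of_isHomogeneous hv hhom, ← Nat.cast_smul_eq_nsmul R,
      ← smul_eq_C_mul, smul_smul, Nat.cast_succ, inv_mul_cancel₀ (Nat.cast_add_one_ne_zero n),
      one_smul]

theorem IsIrrotational.exists_potential {m : ℕ} (hv : IsIrrotational v)
    (hdeg : ∀ i, (v i).totalDegree ≤ m) :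
    ∃ f : MvPolynomial σ R, f.totalDegree ≤ m + 1 ∧ ∀ j, pderiv j f = v j := by
  choose F hFhom hF using fun k => (hv.homogeneousComponent k).exists_isHomogeneous_potential
    fun i => homogeneousComponent_isHomogeneous k (v i)
  refine ⟨∑ k ∈ Finset.range (m + 1), F k, totalDegree_finsetSum_le fun k hk => ?_, fun j => ?_⟩
  · exact (hFhom k).totalDegree_le.trans (by simpa using hk)
  · simp only [map_sum, hF, sum_homogeneousComponent_of_totalDegree_le (hdeg j)]

end Potential

end MvPolynomial

open MvPolynomial

theorem mem_Sm_iff_exists_potential_general (d m : ℕ)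
    (v : Fin d → MvPolynomial (Fin d) ℝ) :
    ((∀ i : Fin d, (v i).totalDegree ≤ m) ∧
      ∀ i j : Fin d, pderiv i (v j) = pderiv j (v i)) ↔
    ∃ f : MvPolynomial (Fin d) ℝ, f.totalDegree ≤ m + 1 ∧
      ∀ i : Fin d, pderiv i f = v i := by
  constructor
  · rintro ⟨hdeg, hv⟩
    exact IsIrrotational.exists_potential hv hdeg
  · rintro ⟨f, hf, hgrad⟩
    obtain rfl : v = fun i => pderiv i f := funext fun i => (hgrad i).symm
    exact ⟨fun i => (totalDegree_pderiv_le i f).trans (by omega), isIrrotational_pderiv f⟩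

/-- The irrotational polynomial space `S_m` is exactly the image of the
polynomials of total degree at most `m + 1` under the formal gradient:
`v ∈ S_m` (each component of total degree ≤ m, symmetric formal Jacobian)
iff `v` is the formal gradient of a polynomial of total degree ≤ m + 1. -/
theorem mem_Sm_iff_exists_potential (d m : ℕ) (hd : 1 ≤ d)
    (v : Fin d → MvPolynomial (Fin d) ℝ) :
    ((∀ i : Fin d, (v i).totalDegree ≤ m) ∧
      ∀ i j : Fin d, pderiv i (v j) = pderiv j (v i)) ↔
    ∃ f : MvPolynomial (Fin d) ℝ, f.totalDegree ≤ m + 1 ∧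
      ∀ i : Fin d, pderiv i f = v i :=
  mem_Sm_iff_exists_potential_general d m v
end
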